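/- Let S_1,...,S_n be a generic family of nonempty subsets in a group G, let (g_1,...,g_n) ∈ G^n, and let F be a hyperforest on vertex set {1,...,n} contained in the intersection graph of (g_1,...,g_n). Then the number of equivalence classes of the set R_F = {(h_1,...,h_n) ∈ G^n : h_i S_i ∩ h_j S_j ≠ ∅ for all i,j adjacent in F} under (h) ∼ (h') iff h_i h_i'^{-1} = h_j h_j'^{-1} for adjacent i,j, equals Π_{j=1}^{n} |S_j|^{deg_F(j)}, where deg_F(j) is the number of hyperedges of F containing vertex j. -/

import Mathlib

open Pointwise

/-- A family `S 1, ..., S n` of finite subsets of a group `G` is generic if for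
every nonempty sequence of distinct indices `ι 1, ..., ι k` and every choice of
elements `g j ∈ (S (ι j))⁻¹ * S (ι j) \ {1}`, the ordered product
`g 1 * g 2 * ⋯ * g k ≠ 1`. -/
def IsGeneric {G : Type*} [Group G] [DecidableEq G] {n : ℕ} (S : Fin n → Finset G) : Prop :=
  ∀ k : ℕ, 1 ≤ k → ∀ ι : Fin k → Fin n, Function.Injective ι →
    ∀ g : Fin k → G, (∀ j, g j ∈ (S (ι j))⁻¹ * S (ι j) ∧ g j ≠ 1) →
      (List.ofFn g).prod ≠ 1

/-- A hyperforest on the vertex set `V`: a hypergraph whose hyperedges (of size at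
least `2`) pairwise intersect in at most one vertex, and in which every cycle
(a cyclic sequence of at least three distinct consecutively adjacent vertices)
is contained in a single hyperedge. -/
structure Hyperforest (V : Type*) [DecidableEq V] where
  edges : Finset (Finset V)
  two_le : ∀ e ∈ edges, 2 ≤ e.card
  inter : ∀ e ∈ edges, ∀ f ∈ edges, e ≠ f → (e ∩ f).card ≤ 1
  cycles : ∀ (k : ℕ) (v : Fin (k + 3) → V), Function.Injective v →
    (∀ j : Fin (k + 3), ∃ e ∈ edges, v j ∈ e ∧ v (j + 1) ∈ e) →
    ∃ e ∈ edges, ∀ j, v j ∈ e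

/-- The equivalence relation on tuples satisfying a property `P`:
`g ∼ h` iff `g i * (h i)⁻¹ = g j * (h j)⁻¹` for every pair `i j` related by `A`. -/
def pkSetoid {G : Type*} [Group G] {n : ℕ} (A : Fin n → Fin n → Prop)
    (P : (Fin n → G) → Prop) : Setoid {g : Fin n → G // P g} where
  r g h := ∀ i j, A i j → g.1 i * (h.1 i)⁻¹ = g.1 j * (h.1 j)⁻¹
  iseqv := by
    constructor
    · intro g i j _
      simp
    · intro g h hgh i j hij
      have := congrArg (·⁻¹) (hgh i j hij)
      simpa [mul_inv_rev] using this
    · intro g h k hgh hhk i j hij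
      have h3 : (g.1 i * (h.1 i)⁻¹) * (h.1 i * (k.1 i)⁻¹) =
          (g.1 j * (h.1 j)⁻¹) * (h.1 j * (k.1 j)⁻¹) := by
        rw [hgh i j hij, hhk i j hij]
      simpa [mul_assoc] using h3


-- Auxiliary lemmas
section
variable {G : Type*} [Group G] [DecidableEq G] {n : ℕ}

lemma gen2 {S : Fin n → Finset G} (hgen : IsGeneric S) {i j : Fin n} (hij : i ≠ j)
    {x y : G} (hx : x ∈ (S i)⁻¹ * S i) (hy : y ∈ (S j)⁻¹ * S j) (hxy : x * y = 1) :
    x = 1 := by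
  by_contra hx1
  have hy1 : y ≠ 1 := by
    intro h; rw [h, mul_one] at hxy; exact hx1 hxy
  refine hgen 2 (by norm_num) ![i, j] ?_ ![x, y] ?_ ?_
  · intro a b hab
    fin_cases a <;> fin_cases b <;> simp_all
  · intro t; fin_cases t <;> simp [hx, hy, hx1, hy1]
  · simp [List.ofFn_succ, hxy]

lemma gen3 {S : Fin n → Finset G} (hgen : IsGeneric S) {i j k : Fin n}
    (hij : i ≠ j) (hjk : j ≠ k) (hik : i ≠ k)
    {x y z : G} (hx : x ∈ (S i)⁻¹ * S i) (hy : y ∈ (S j)⁻¹ * S j)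
    (hz : z ∈ (S k)⁻¹ * S k) (hxyz : x * y * z = 1) : x = 1 := by
  by_cases hx1 : x = 1
  · exact hx1
  exfalso
  by_cases hy1 : y = 1
  · rw [hy1, mul_one] at hxyz
    exact hx1 (gen2 hgen hik hx hz hxyz)
  by_cases hz1 : z = 1
  · rw [hz1, mul_one] at hxyz
    exact hx1 (gen2 hgen hij hx hy hxyz)
  refine hgen 3 (by norm_num) ![i, j, k] ?_ ![x, y, z] ?_ ?_
  · intro a b hab
    fin_cases a <;> fin_cases b <;> simp_all
  · intro t; fin_cases t <;> simp [hx, hy, hz, hx1, hy1, hz1]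
  · simp [List.ofFn_succ, ← mul_assoc, hxyz]

lemma inv_mul_mem {h a : G} {s : Finset G} (ha : a ∈ h • s) : h⁻¹ * a ∈ s := by
  obtain ⟨b, hb, rfl⟩ := Finset.mem_smul_finset.1 ha
  simpa [smul_eq_mul] using hb

lemma mem_invmul {s : Finset G} {h a1 a2 : G} (h1 : a1 ∈ h • s) (h2 : a2 ∈ h • s) :
    a1⁻¹ * a2 ∈ s⁻¹ * s := by
  obtain ⟨b1, hb1, rfl⟩ := Finset.mem_smul_finset.1 h1
  obtain ⟨b2, hb2, rfl⟩ := Finset.mem_smul_finset.1 h2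
  have : (h • b1)⁻¹ * (h • b2) = b1⁻¹ * b2 := by
    simp [smul_eq_mul, mul_assoc]
  rw [this]
  exact Finset.mul_mem_mul (Finset.inv_mem_inv hb1) hb2

lemma exists_unique_common {S : Fin n → Finset G} (hgen : IsGeneric S)
    {h : Fin n → G} {e : Finset (Fin n)} (h2 : 2 ≤ e.card)
    (hint : ∀ i ∈ e, ∀ j ∈ e, i ≠ j → ((h i • S i) ∩ (h j • S j)).Nonempty) :
    ∃! a : G, ∀ i ∈ e, a ∈ h i • S i := by
  obtain ⟨i0, hi0, i1, hi1, h01⟩ := Finset.one_lt_card.1 h2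
  obtain ⟨a, ha⟩ := hint i0 hi0 i1 hi1 h01
  rw [Finset.mem_inter] at ha
  have hmain : ∀ i ∈ e, a ∈ h i • S i := by
    intro i hi
    by_cases hii0 : i = i0
    · exact hii0 ▸ ha.1
    by_cases hii1 : i = i1
    · exact hii1 ▸ ha.2
    obtain ⟨a1, ha1⟩ := hint i0 hi0 i hi (fun hh => hii0 hh.symm)
    obtain ⟨a2, ha2⟩ := hint i1 hi1 i hi (fun hh => hii1 hh.symm)
    rw [Finset.mem_inter] at ha1 ha2
    have hx : a⁻¹ * a1 ∈ (S i0)⁻¹ * S i0 := mem_invmul ha.1 ha1.1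
    have hy : a1⁻¹ * a2 ∈ (S i)⁻¹ * S i := mem_invmul ha1.2 ha2.2
    have hz : a2⁻¹ * a ∈ (S i1)⁻¹ * S i1 := mem_invmul ha2.1 ha.2
    have hprod : (a⁻¹ * a1) * (a1⁻¹ * a2) * (a2⁻¹ * a) = 1 := by group
    have := gen3 hgen (fun hh => hii0 hh.symm) hii1 h01 hx hy hz hprod
    have : a = a1 := by
      have h3 : a * (a⁻¹ * a1) = a * 1 := by rw [this]
      simpa [mul_assoc] using h3.symm
    exact this ▸ ha1.2
  refine ⟨a, hmain, ?_⟩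
  intro b hb
  have hx : a⁻¹ * b ∈ (S i0)⁻¹ * S i0 := mem_invmul (hmain i0 hi0) (hb i0 hi0)
  have hy : b⁻¹ * a ∈ (S i1)⁻¹ * S i1 := mem_invmul (hb i1 hi1) (hmain i1 hi1)
  have := gen2 hgen h01 hx hy (by group)
  have h3 : a * (a⁻¹ * b) = a * 1 := by rw [this]
  simpa [mul_assoc] using h3

end

section
variable {n : ℕ}

def adjGraph (E : Finset (Finset (Fin n))) : SimpleGraph (Fin n) where
  Adj a b := a ≠ b ∧ ∃ e ∈ E, a ∈ e ∧ b ∈ e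
  symm := ⟨by rintro a b ⟨hab, e, he, ha, hb⟩; exact ⟨hab.symm, e, he, hb, ha⟩⟩
  loopless := ⟨fun a h => h.1 rfl⟩

lemma support_get_eq_getVert {V : Type*} {G : SimpleGraph V} :
    ∀ {u v : V} (p : G.Walk u v) (t : ℕ) (ht : t < p.support.length),
      p.support.get ⟨t, ht⟩ = p.getVert t := by
  intro u v p
  induction p with
  | nil =>
    intro t ht
    have ht1 : t < 1 := by simpa using ht
    interval_cases t
    rfl
  | cons h q ih =>
    intro t ht
    match t with
    | 0 => rfl
    | Nat.succ t =>
      have ht' : t < q.support.length := by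
        simpa [SimpleGraph.Walk.support_cons] using ht
      simpa [SimpleGraph.Walk.support_cons, SimpleGraph.Walk.getVert_cons_succ] using ih t ht'

lemma two_le_card_inter {α : Type*} [DecidableEq α] {e f : Finset α} {i j : α}
    (hie : i ∈ e) (hif : i ∈ f) (hje : j ∈ e) (hjf : j ∈ f) (hij : i ≠ j) :
    1 < (e ∩ f).card :=
  Finset.one_lt_card.2 ⟨i, Finset.mem_inter.2 ⟨hie, hif⟩, j, Finset.mem_inter.2 ⟨hje, hjf⟩, hij⟩

lemma no_reach (F : Hyperforest (Fin n)) {E : Finset (Finset (Fin n))} (hE : E ⊆ F.edges)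
    {e0 : Finset (Fin n)} (he0 : e0 ∈ F.edges) (he0E : e0 ∉ E) {i j : Fin n}
    (hi : i ∈ e0) (hj : j ∈ e0) (hij : i ≠ j) : ¬ (adjGraph E).Reachable i j := by
  rintro ⟨w⟩
  obtain ⟨p, hp⟩ := w.toPath
  -- p : walk, hp : p.IsPath
  match hm : p.length with
  | 0 => exact hij (SimpleGraph.Walk.eq_of_length_eq_zero hm)
  | 1 =>
    have hadj := p.adj_getVert_succ (i := 0) (by omega)
    rw [p.getVert_zero] at hadj
    have h1 : p.getVert 1 = j := p.getVert_of_length_le (by omega)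
    rw [h1] at hadj
    obtain ⟨_, e, heE, hie, hje⟩ := hadj
    have hne : e ≠ e0 := fun hh => he0E (hh ▸ heE)
    exact absurd (F.inter e (hE heE) e0 he0 hne)
      (by simpa using (two_le_card_inter hie hi hje hj hij))
  | (k + 2) =>
    have hlen : p.support.length = k + 3 := by
      rw [SimpleGraph.Walk.length_support, hm]
    set v : Fin (k + 3) → Fin n := fun t => p.getVert t.val with hv
    have hinj : Function.Injective v := by
      intro a b hab
      have ha : (a : ℕ) < p.support.length := by omega
      have hb : (b : ℕ) < p.support.length := by omega
      have : p.support.get ⟨a, ha⟩ = p.support.get ⟨b, hb⟩ := by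
        rw [support_get_eq_getVert, support_get_eq_getVert]; exact hab
      have := List.nodup_iff_injective_get.1 hp.support_nodup this
      exact Fin.ext (by simpa using congrArg Fin.val this)
    have hcyc : ∀ t : Fin (k + 3), ∃ e ∈ F.edges, v t ∈ e ∧ v (t + 1) ∈ e := by
      intro t
      by_cases ht : (t : ℕ) < k + 2
      · have hsucc : ((t + 1 : Fin (k + 3)) : ℕ) = (t : ℕ) + 1 := by
          rw [Fin.val_add_one]
          have : t ≠ Fin.last (k + 2) := by
            intro hh; rw [hh] at ht; simp at ht
          simp [this]
        have hadj := p.adj_getVert_succ (i := (t : ℕ)) (by omega)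
        obtain ⟨_, e, heE, h1, h2⟩ := hadj
        exact ⟨e, hE heE, h1, by rw [hv]; simp only [hsucc]; exact h2⟩
      · have htl : t = Fin.last (k + 2) := by
          apply Fin.ext; simp; omega
        have h1 : v t = j := by
          rw [hv, htl]
          exact p.getVert_of_length_le (by omega)
        have h2 : v (t + 1) = i := by
          rw [htl]
          have : (Fin.last (k + 2) + 1 : Fin (k + 3)) = 0 := by
            apply Fin.ext
            rw [Fin.val_add_one]
            simp
          rw [this, hv]
          exact p.getVert_zero
        exact ⟨e0, he0, h1 ▸ hj, h2 ▸ hi⟩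
    obtain ⟨e, heF, hall⟩ := F.cycles k v hinj hcyc
    -- v 0 = i, v last = j both in e and in e0 and distinct
    have hv0 : v 0 = i := p.getVert_zero
    have hvl : v (Fin.last (k + 2)) = j := by
      show p.getVert ((Fin.last (k + 2) : Fin (k + 3)) : ℕ) = j
      rw [Fin.val_last]
      exact p.getVert_of_length_le (by omega)
    have hie' : i ∈ e := hv0 ▸ hall 0
    have hje' : j ∈ e := hvl ▸ hall (Fin.last (k + 2))
    have hee0 : e = e0 := by
      by_contra hne
      exact absurd (F.inter e heF e0 he0 hne)
        (by simpa using two_le_card_inter hie' hi hje' hj hij)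
    -- first edge of path is in E and shares v 0, v 1 with e = e0
    have hadj := p.adj_getVert_succ (i := 0) (by omega)
    obtain ⟨hne01, e', heE', h0, h1⟩ := hadj
    have hv1 : v 1 = p.getVert 1 := rfl
    have h0' : v 0 ∈ e' := by rw [hv0]; rw [hv] at hv0; exact hv0 ▸ h0
    have h1' : v 1 ∈ e' := h1
    have hne' : e' ≠ e0 := fun hh => he0E (hh ▸ heE')
    have h0e : v 0 ∈ e0 := hee0 ▸ hall 0
    have h1e : v 1 ∈ e0 := hee0 ▸ hall 1
    have hne01' : v 0 ≠ v 1 := fun hh => by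
      have := hinj hh; simp [Fin.ext_iff] at this
    exact absurd (F.inter e' (hE heE') e0 he0 hne')
      (by simpa using two_le_card_inter h0' h0e h1' h1e hne01')

end

section
variable {G : Type*} [Group G] {n : ℕ}

lemma exists_h (F : Hyperforest (Fin n)) (E : Finset (Finset (Fin n))) :
    E ⊆ F.edges → ∀ μ : Finset (Fin n) → Fin n → G,
    ∃ h : Fin n → G, ∀ e ∈ E, ∀ i ∈ e, ∀ j ∈ e, h i * μ e i = h j * μ e j := by
  classical
  induction E using Finset.strongInduction with
  | _ E ih =>
    intro hE μ
    rcases E.eq_empty_or_nonempty with rfl | ⟨e0, he0⟩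
    · exact ⟨1, by simp⟩
    · set E' := E.erase e0 with hE'
      have hE'ss : E' ⊂ E := Finset.erase_ssubset he0
      obtain ⟨h', hh'⟩ := ih E' hE'ss (hE'ss.subset.trans hE) μ
      have he0F : e0 ∈ F.edges := hE he0
      have he0E' : e0 ∉ E' := Finset.notMem_erase e0 E
      have hE'F : E' ⊆ F.edges := hE'ss.subset.trans hE
      have uniq : ∀ i1 ∈ e0, ∀ i2 ∈ e0, ∀ x, (adjGraph E').Reachable i1 x →
          (adjGraph E').Reachable i2 x → i1 = i2 := by
        intro i1 h1 i2 h2 x r1 r2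
        by_contra hne
        exact no_reach F hE'F he0F he0E' h1 h2 hne (r1.trans r2.symm)
      set c : Fin n → G := fun i => (h' i * μ e0 i)⁻¹ with hc
      set h : Fin n → G := fun x =>
        if hx : ∃ i, i ∈ e0 ∧ (adjGraph E').Reachable i x then c hx.choose * h' x
        else h' x with hfun
      refine ⟨h, ?_⟩
      intro e he i hi j hj
      by_cases hee0 : e = e0
      · subst hee0
        have key : ∀ i, i ∈ e → h i * μ e i = 1 := by
          intro i hi
          have hex : ∃ i0, i0 ∈ e ∧ (adjGraph E').Reachable i0 i :=
            ⟨i, hi, SimpleGraph.Reachable.refl i⟩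
          have hch : hex.choose = i :=
            uniq _ hex.choose_spec.1 _ hi i hex.choose_spec.2
              (SimpleGraph.Reachable.refl i)
          rw [hfun]
          simp only [dif_pos hex, hch, hc]
          group
        rw [key i hi, key j hj]
      · have heE' : e ∈ E' := Finset.mem_erase.2 ⟨hee0, he⟩
        by_cases hij : i = j
        · rw [hij]
        have hadj : (adjGraph E').Reachable i j :=
          SimpleGraph.Adj.reachable ⟨hij, e, heE', hi, hj⟩
        have base := hh' e heE' i hi j hj
        by_cases hxi : ∃ i0, i0 ∈ e0 ∧ (adjGraph E').Reachable i0 i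
        · have hxj : ∃ i0, i0 ∈ e0 ∧ (adjGraph E').Reachable i0 j :=
            ⟨hxi.choose, hxi.choose_spec.1, hxi.choose_spec.2.trans hadj⟩
          have hch : hxj.choose = hxi.choose :=
            uniq _ hxj.choose_spec.1 _ hxi.choose_spec.1 j hxj.choose_spec.2
              (hxi.choose_spec.2.trans hadj)
          rw [hfun]
          simp only [dif_pos hxi, dif_pos hxj, hch, mul_assoc, base]
        · have hxj : ¬ ∃ i0, i0 ∈ e0 ∧ (adjGraph E').Reachable i0 j := by
            rintro ⟨i0, h0, r⟩
            exact hxi ⟨i0, h0, r.trans hadj.symm⟩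
          rw [hfun]
          simp only [dif_neg hxi, dif_neg hxj, base]

end


section mainaux
variable {G : Type*} [Group G] [DecidableEq G] {n : ℕ}

def Aprop (F : Hyperforest (Fin n)) (i j : Fin n) : Prop :=
  i ≠ j ∧ ∃ e ∈ F.edges, i ∈ e ∧ j ∈ e

def Pprop (S : Fin n → Finset G) (F : Hyperforest (Fin n)) (h : Fin n → G) : Prop :=
  ∀ i j, Aprop F i j → ((h i • S i) ∩ (h j • S j)).Nonempty

lemma key {S : Fin n → Finset G} (hgen : IsGeneric S) {F : Hyperforest (Fin n)}
    (x : {h : Fin n → G // Pprop S F h}) {e : Finset (Fin n)} (he : e ∈ F.edges) :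
    ∃! a : G, ∀ i ∈ e, a ∈ x.1 i • S i :=
  exists_unique_common hgen (F.two_le e he)
    (fun i hi j hj hij => x.2 i j ⟨hij, e, he, hi, hj⟩)

noncomputable def aa {S : Fin n → Finset G} (hgen : IsGeneric S) {F : Hyperforest (Fin n)}
    (x : {h : Fin n → G // Pprop S F h}) {e : Finset (Fin n)} (he : e ∈ F.edges) : G :=
  (key hgen x he).choose

lemma aa_mem {S : Fin n → Finset G} (hgen : IsGeneric S) {F : Hyperforest (Fin n)}
    (x : {h : Fin n → G // Pprop S F h}) {e : Finset (Fin n)} (he : e ∈ F.edges) :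
    ∀ i ∈ e, aa hgen x he ∈ x.1 i • S i :=
  (key hgen x he).choose_spec.1

lemma aa_unique {S : Fin n → Finset G} (hgen : IsGeneric S) {F : Hyperforest (Fin n)}
    (x : {h : Fin n → G // Pprop S F h}) {e : Finset (Fin n)} (he : e ∈ F.edges)
    {b : G} (hb : ∀ i ∈ e, b ∈ x.1 i • S i) : b = aa hgen x he :=
  (key hgen x he).choose_spec.2 b hb

lemma ratio_eq {a b u v : G} (h1 : a⁻¹ * u = b⁻¹ * v) : a * b⁻¹ = u * v⁻¹ := by
  have h2 : a * (a⁻¹ * u) * v⁻¹ = a * (b⁻¹ * v) * v⁻¹ := by rw [h1]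
  simpa [mul_assoc] using h2.symm

noncomputable def phimap {S : Fin n → Finset G} (hgen : IsGeneric S) {F : Hyperforest (Fin n)}
    (x : {h : Fin n → G // Pprop S F h}) :
    ∀ e : {e // e ∈ F.edges}, ∀ i : {i // i ∈ e.1}, {s // s ∈ S i.1} :=
  fun e i => ⟨(x.1 i.1)⁻¹ * aa hgen x e.2, inv_mul_mem (aa_mem hgen x e.2 i.1 i.2)⟩

lemma phimap_wd {S : Fin n → Finset G} (hgen : IsGeneric S) {F : Hyperforest (Fin n)}
    (x y : {h : Fin n → G // Pprop S F h})
    (hr : ∀ i j, Aprop F i j → x.1 i * (y.1 i)⁻¹ = x.1 j * (y.1 j)⁻¹) :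
    phimap hgen x = phimap hgen y := by
  funext e i
  apply Subtype.ext
  obtain ⟨e, he⟩ := e
  obtain ⟨i, hi⟩ := i
  show (x.1 i)⁻¹ * aa hgen x he = (y.1 i)⁻¹ * aa hgen y he
  obtain ⟨i0, hi0, i1, hi1, h01⟩ := Finset.one_lt_card.1 (F.two_le e he)
  have hc : ∀ i' ∈ e, y.1 i' * (x.1 i')⁻¹ = y.1 i0 * (x.1 i0)⁻¹ := by
    intro i' hi'
    by_cases hii : i' = i0
    · rw [hii]
    · have h2 := congrArg (·⁻¹) (hr i' i0 ⟨hii, e, he, hi', hi0⟩)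
      simpa [mul_inv_rev] using h2
  have claim : ∀ i' ∈ e, (y.1 i0) * (x.1 i0)⁻¹ * aa hgen x he ∈ y.1 i' • S i' := by
    intro i' hi'
    obtain ⟨s, hs, hsa⟩ := Finset.mem_smul_finset.1 (aa_mem hgen x he i' hi')
    rw [Finset.mem_smul_finset]
    refine ⟨s, hs, ?_⟩
    rw [smul_eq_mul] at hsa ⊢
    rw [← hc i' hi', ← hsa]
    group
  have hbY : (y.1 i0) * (x.1 i0)⁻¹ * aa hgen x he = aa hgen y he :=
    aa_unique hgen y he claim
  rw [← hbY, ← hc i hi]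
  group

end mainaux

/-- For a generic family and a hyperforest `F` contained in the intersection graph
of `(g 1, …, g n)`, the number of equivalence classes of `R_F` is
`∏_j |S j| ^ deg_F(j)`, where `deg_F(j)` is the number of hyperedges containing `j`. -/
theorem stmt19 {G : Type*} [Group G] [DecidableEq G] {n : ℕ}
    (S : Fin n → Finset G) (hne : ∀ i, (S i).Nonempty) (hgen : IsGeneric S)
    (g : Fin n → G) (F : Hyperforest (Fin n))
    (hsub : ∀ e ∈ F.edges, ∀ i ∈ e, ∀ j ∈ e, i ≠ j →
      ((g i • S i) ∩ (g j • S j)).Nonempty) :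
    Nat.card (Quotient (pkSetoid (G := G)
        (fun i j => i ≠ j ∧ ∃ e ∈ F.edges, i ∈ e ∧ j ∈ e)
        (fun h : Fin n → G => ∀ i j, (i ≠ j ∧ ∃ e ∈ F.edges, i ∈ e ∧ j ∈ e) →
          ((h i • S i) ∩ (h j • S j)).Nonempty))) =
      ∏ j : Fin n, (S j).card ^ (F.edges.filter fun e => j ∈ e).card := by

  classical
  show Nat.card (Quotient (pkSetoid (G := G) (Aprop F) (Pprop S F))) =
      ∏ j : Fin n, (S j).card ^ (F.edges.filter fun e => j ∈ e).card
  set f : Quotient (pkSetoid (G := G) (Aprop F) (Pprop S F)) →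
      (∀ e : {e // e ∈ F.edges}, ∀ i : {i // i ∈ e.1}, {s // s ∈ S i.1}) :=
    Quotient.lift (phimap hgen) (fun a b hab => phimap_wd hgen a b hab) with hf
  have hinj : Function.Injective f := by
    intro q1 q2 heq
    obtain ⟨x⟩ := q1
    obtain ⟨y⟩ := q2
    have hphi : phimap hgen x = phimap hgen y := heq
    refine Quotient.sound ?_
    rintro i j ⟨hij, e, he, hi, hj⟩
    have h1 := congrArg Subtype.val (congrFun (congrFun hphi ⟨e, he⟩) ⟨i, hi⟩)
    have h2 := congrArg Subtype.val (congrFun (congrFun hphi ⟨e, he⟩) ⟨j, hj⟩)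
    have e1 : x.1 i * (y.1 i)⁻¹ = aa hgen x he * (aa hgen y he)⁻¹ := ratio_eq h1
    have e2 : x.1 j * (y.1 j)⁻¹ = aa hgen x he * (aa hgen y he)⁻¹ := ratio_eq h2
    rw [e1, e2]
  have hsurj : Function.Surjective f := by
    intro w
    set mu : Finset (Fin n) → Fin n → G := fun e i =>
      if hh : e ∈ F.edges ∧ i ∈ e then (w ⟨e, hh.1⟩ ⟨i, hh.2⟩ : G) else 1 with hmu
    obtain ⟨h, hh⟩ := exists_h F F.edges (le_refl _) mu
    have hmuS : ∀ e (he : e ∈ F.edges), ∀ i (hi : i ∈ e), mu e i ∈ S i := by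
      intro e he i hi
      rw [hmu]
      simp only [dif_pos (⟨he, hi⟩ : e ∈ F.edges ∧ i ∈ e)]
      exact (w ⟨e, he⟩ ⟨i, hi⟩).2
    have hmem : ∀ e (he : e ∈ F.edges), ∀ i (hi : i ∈ e), h i * mu e i ∈ h i • S i := by
      intro e he i hi
      rw [Finset.mem_smul_finset]
      exact ⟨mu e i, hmuS e he i hi, smul_eq_mul (h i) (mu e i) ▸ rfl⟩
    have Ph : Pprop S F h := by
      rintro i j ⟨hij, e, he, hi, hj⟩
      refine ⟨h i * mu e i, Finset.mem_inter.2 ⟨hmem e he i hi, ?_⟩⟩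
      rw [hh e he i hi j hj]
      exact hmem e he j hj
    refine ⟨Quotient.mk _ ⟨h, Ph⟩, ?_⟩
    show phimap hgen ⟨h, Ph⟩ = w
    funext e i
    apply Subtype.ext
    obtain ⟨e, he⟩ := e
    obtain ⟨i, hi⟩ := i
    show (h i)⁻¹ * aa hgen ⟨h, Ph⟩ he = (w ⟨e, he⟩ ⟨i, hi⟩ : G)
    have hb : ∀ i' ∈ e, h i * mu e i ∈ (⟨h, Ph⟩ : {h : Fin n → G // Pprop S F h}).1 i' • S i' := by
      intro i' hi'
      rw [hh e he i hi i' hi']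
      exact hmem e he i' hi'
    have haa : h i * mu e i = aa hgen ⟨h, Ph⟩ he := aa_unique hgen ⟨h, Ph⟩ he hb
    rw [← haa, hmu]
    simp only [dif_pos (⟨he, hi⟩ : e ∈ F.edges ∧ i ∈ e)]
    group
  rw [Nat.card_eq_of_bijective f ⟨hinj, hsurj⟩]
  rw [Nat.card_pi]
  have hstep : ∀ e : {e // e ∈ F.edges},
      Nat.card (∀ i : {i // i ∈ e.1}, {s // s ∈ S i.1}) = ∏ i ∈ e.1, (S i).card := by
    intro e
    rw [Nat.card_pi]
    have : ∀ i : {i // i ∈ e.1}, Nat.card {s // s ∈ S i.1} = (S i.1).card := by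
      intro i
      rw [Nat.card_eq_fintype_card]
      exact Fintype.card_coe _
    rw [Finset.prod_congr rfl (fun i _ => this i)]
    exact Finset.prod_coe_sort e.1 (fun i => (S i).card)
  rw [Finset.prod_congr rfl (fun e _ => hstep e)]
  rw [Finset.prod_coe_sort F.edges (fun e => ∏ i ∈ e, (S i).card)]
  calc ∏ e ∈ F.edges, ∏ i ∈ e, (S i).card
      = ∏ e ∈ F.edges, ∏ j : Fin n, if j ∈ e then (S j).card else 1 := by
        refine Finset.prod_congr rfl fun e _ => ?_
        rw [← Finset.prod_filter, Finset.filter_univ_mem]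
    _ = ∏ j : Fin n, ∏ e ∈ F.edges, if j ∈ e then (S j).card else 1 :=
        Finset.prod_comm
    _ = ∏ j : Fin n, (S j).card ^ (F.edges.filter fun e => j ∈ e).card := by
        refine Finset.prod_congr rfl fun j _ => ?_
        rw [← Finset.prod_filter, Finset.prod_const]
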